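/- arXiv:2409.16939 — 3 statements merged into one kernel-verified Lean document; each statement's English description precedes it below -/
import Mathlib

section
/- (Super Frobenius Reciprocity) Let H be a subgroup of a finite group G with compatible supercharacter theories C_H and C_G. For every superclass function Φ on H and every superclass function θ on G, ⟨Sind_H^G Φ, θ⟩_G = ⟨Φ, θ|_H⟩_H, where ⟨·,·⟩ denotes the usual inner product of class functions, (⟨f,g⟩_G = (1/|G|) Σ_{x∈G} f(x) conj(g(x))). -/
open scoped BigOperators Classical

noncomputable section

/-- `χ : G → ℂ` is an irreducible character of `G`. -/
def IsIrrChar (G : Type) [Group G] (χ : G → ℂ) : Prop :=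
  ∃ V : FDRep ℂ G, CategoryTheory.Simple V ∧ χ = V.character

/-- The set of irreducible characters of `G`. -/
def Irr (G : Type) [Group G] : Set (G → ℂ) := {χ | IsIrrChar G χ}

/-- The trivial character. -/
def triv (G : Type) [Group G] : G → ℂ := fun _ => 1

/-- `σ_A = ∑_{χ ∈ A} χ(1)·χ`. -/
def sigma {G : Type} [Group G] (A : Set (G → ℂ)) : G → ℂ :=
  fun g => ∑ᶠ χ ∈ A, χ 1 * χ g

/-- The regular character `Reg(G) = ∑_{χ ∈ Irr G} χ(1)·χ`. -/
def Reg (G : Type) [Group G] : G → ℂ := fun g => ∑ᶠ χ ∈ Irr G, χ 1 * χ g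

/-- `P` is a partition of the set `S`. -/
def IsPartitionOn {α : Type} (S : Set α) (P : Set (Set α)) : Prop :=
  (∀ A ∈ P, A.Nonempty) ∧ (∀ A ∈ P, A ⊆ S) ∧ ∀ s ∈ S, ∃! A, A ∈ P ∧ s ∈ A

/-- A supercharacter theory of a finite group `G`. -/
structure SCTheory (G : Type) [Group G] [Finite G] where
  X : Set (Set (G → ℂ))
  K : Set (Set G)
  partX : IsPartitionOn (Irr G) X
  partK : IsPartitionOn Set.univ K
  one_mem : ({1} : Set G) ∈ K
  card_eq : X.ncard = K.ncard
  const : ∀ A ∈ X, ∀ B ∈ K, ∀ x ∈ B, ∀ y ∈ B, sigma A x = sigma A y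

/-- The superclass of `g`. -/
def SCl {G : Type} [Group G] [Finite G] (C : SCTheory G) (g : G) : Set G :=
  ⋃₀ {B | B ∈ C.K ∧ g ∈ B}

/-- A superclass function: a function constant on each superclass. -/
def IsSCF {G : Type} [Group G] [Finite G] (C : SCTheory G) (f : G → ℂ) : Prop :=
  ∀ B ∈ C.K, ∀ x ∈ B, ∀ y ∈ B, f x = f y

/-- A supercharacter of the theory `C`. -/
def IsSC {G : Type} [Group G] [Finite G] (C : SCTheory G) (σ : G → ℂ) : Prop :=
  ∃ A ∈ C.X, σ = sigma A

/-- Compatibility of a theory on a subgroup with a theory on the whole group. -/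
def Compat {G : Type} [Group G] [Finite G] (H : Subgroup G) (CH : SCTheory H)
    (CG : SCTheory G) : Prop :=
  ∀ h : H, (Subtype.val '' SCl CH h : Set G) ⊆ SCl CG (h : G)

/-- Compatibility of theories on nested subgroups. -/
def CompatLE {G : Type} [Group G] [Finite G] {H₁ H₂ : Subgroup G} (hle : H₁ ≤ H₂)
    (C₁ : SCTheory H₁) (C₂ : SCTheory H₂) : Prop :=
  ∀ x : H₁, (Subtype.val '' SCl C₁ x : Set G) ⊆
    Subtype.val '' SCl C₂ ⟨(x : G), hle x.2⟩

/-- Extension by zero of a function on a subgroup. -/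
def ext0 {G : Type} [Group G] (H : Subgroup G) (Φ : H → ℂ) : G → ℂ :=
  fun g => if hg : g ∈ H then Φ ⟨g, hg⟩ else 0

/-- Superinduction from `H` to `G`. -/
def Sind {G : Type} [Group G] [Finite G] (H : Subgroup G) (CG : SCTheory G)
    (Φ : H → ℂ) : G → ℂ :=
  fun g => ((Nat.card G : ℂ) / ((Nat.card H : ℂ) * ((SCl CG g).ncard : ℂ))) *
    ∑ᶠ x ∈ SCl CG g, ext0 H Φ x

/-- The standard inner product of functions on a finite type. -/
def iprod (α : Type) [Finite α] (f g : α → ℂ) : ℂ :=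
  (Nat.card α : ℂ)⁻¹ * ∑ᶠ x : α, f x * (starRingEnd ℂ) (g x)

/-- `f` is a linear (degree-one) character. -/
def IsLin {K : Type} [Group K] (f : K → ℂ) : Prop :=
  ∃ φ : K →* ℂˣ, f = fun k => (φ k : ℂ)

/-- `f` is a sum of linear characters. -/
def IsSumLin {K : Type} [Group K] (f : K → ℂ) : Prop :=
  f ∈ AddSubmonoid.closure {g | IsLin g}

end

/-!
`Sind H C Φ` is `|G| / |H|` times the average of the zero extension of `Φ` over superclasses.
Averaging over the blocks of a partition is self-adjoint against functions that are constant on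
the blocks, so pairing with the superclass function `θ` simply removes the averaging, and the sum
over `G` of `ext0 H Φ · conj θ` is the sum over `H` of `Φ · conj θ`.
-/

open Finset

section Superclass

variable {G : Type} [Group G] [Finite G] (C : SCTheory G)

theorem SCl_eq_of_mem_K {B : Set G} {g : G} (hB : B ∈ C.K) (hg : g ∈ B) : SCl C g = B := by
  obtain ⟨A, -, huniq⟩ := C.partK.2.2 g (Set.mem_univ g)
  have hblocks : {B | B ∈ C.K ∧ g ∈ B} = {B} := by
    ext B'
    exact ⟨fun h => (huniq B' h).trans (huniq B ⟨hB, hg⟩).symm, fun h => h ▸ ⟨hB, hg⟩⟩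
  rw [SCl, hblocks, Set.sUnion_singleton]

theorem SCl_mem_K (g : G) : SCl C g ∈ C.K := by
  obtain ⟨B, ⟨hB, hg⟩, -⟩ := C.partK.2.2 g (Set.mem_univ g)
  rwa [SCl_eq_of_mem_K C hB hg]

theorem mem_SCl_self (g : G) : g ∈ SCl C g := by
  obtain ⟨B, ⟨hB, hg⟩, -⟩ := C.partK.2.2 g (Set.mem_univ g)
  rwa [SCl_eq_of_mem_K C hB hg]

theorem mem_SCl_iff {x g : G} : x ∈ SCl C g ↔ SCl C x = SCl C g :=
  ⟨fun hx => SCl_eq_of_mem_K C (SCl_mem_K C g) hx, fun h => h ▸ mem_SCl_self C x⟩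

theorem IsSCF.apply_eq_of_SCl_eq {C : SCTheory G} {f : G → ℂ} (hf : IsSCF C f) {x y : G}
    (h : SCl C x = SCl C y) : f x = f y :=
  hf _ (SCl_mem_K C y) x ((mem_SCl_iff C).2 h) y (mem_SCl_self C y)

end Superclass

theorem sum_fiberAverage_mul {α ι K : Type*} [Fintype α] [DecidableEq ι] [Field K] [CharZero K]
    (κ : α → ι) (f θ : α → K) (hθ : ∀ x y, κ x = κ y → θ x = θ y) :
    ∑ g, ((#{x | κ x = κ g} : K)⁻¹ * ∑ x with κ x = κ g, f x) * θ g = ∑ g, f g * θ g := by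
  calc ∑ g, ((#{x | κ x = κ g} : K)⁻¹ * ∑ x with κ x = κ g, f x) * θ g
      = ∑ g, ∑ x with κ x = κ g, (#{y | κ y = κ x} : K)⁻¹ * (f x * θ x) := by
        refine sum_congr rfl fun g _ => ?_
        rw [mul_assoc, sum_mul, mul_sum]
        refine sum_congr rfl fun x hx => ?_
        rw [(mem_filter.1 hx).2, hθ x g (mem_filter.1 hx).2]
    _ = ∑ x, ∑ g with κ x = κ g, (#{y | κ y = κ x} : K)⁻¹ * (f x * θ x) := by
        simp only [sum_filter]
        exact sum_comm
    _ = ∑ x, f x * θ x := by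
        refine sum_congr rfl fun x _ => ?_
        simp_rw [eq_comm (a := κ x)]
        have hne : (#{y | κ y = κ x} : K) ≠ 0 :=
          Nat.cast_ne_zero.2 (card_ne_zero_of_mem (mem_filter.2 ⟨mem_univ x, rfl⟩))
        rw [sum_const, nsmul_eq_mul, ← mul_assoc, mul_inv_cancel₀ hne, one_mul]

theorem sum_ext0_mul {G : Type} [Group G] [Fintype G] (H : Subgroup G) (Φ : H → ℂ) (F : G → ℂ) :
    ∑ g, ext0 H Φ g * F g = ∑ h : H, Φ h * F h := by
  simp only [ext0, dite_mul, zero_mul]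
  rw [sum_dite, sum_const_zero, add_zero]
  exact Fintype.sum_equiv (Equiv.subtypeEquivRight (by simp)) _ _ fun _ => rfl

theorem Sind_eq_mul_fiberAverage {G : Type} [Group G] [Fintype G] (H : Subgroup G)
    (C : SCTheory G) (Φ : H → ℂ) (g : G) :
    Sind H C Φ g = (Nat.card G / Nat.card H : ℂ) *
      ((#{x | SCl C x = SCl C g} : ℂ)⁻¹ * ∑ x with SCl C x = SCl C g, ext0 H Φ x) := by
  have hSCl : SCl C g = ↑({x | SCl C x = SCl C g} : Finset G) := by
    ext x
    simp [mem_SCl_iff]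
  rw [Sind]
  conv_lhs => rw [hSCl, finsum_mem_coe_finset, Set.ncard_coe_finset]
  ring

theorem stmt4_general {G : Type} [Group G] [Finite G] (H : Subgroup G)
    (CG : SCTheory G) (Φ : H → ℂ) (θ : G → ℂ) (hθ : IsSCF CG θ) :
    iprod G (Sind H CG Φ) θ = iprod H Φ (fun h => θ (h : G)) := by
  have := Fintype.ofFinite G
  rw [iprod, iprod, finsum_eq_sum_of_fintype, finsum_eq_sum_of_fintype]
  simp_rw [Sind_eq_mul_fiberAverage, mul_assoc (Nat.card G / Nat.card H : ℂ), ← mul_sum]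
  rw [sum_fiberAverage_mul (SCl CG) _ _ fun x y h => congrArg _ (hθ.apply_eq_of_SCl_eq h),
    sum_ext0_mul, div_eq_mul_inv, mul_assoc,
    inv_mul_cancel_left₀ (Nat.cast_ne_zero.2 Nat.card_pos.ne')]

/-- Super Frobenius Reciprocity. -/
theorem stmt4 {G : Type} [Group G] [Finite G] (H : Subgroup G)
    (CH : SCTheory H) (CG : SCTheory G) (hc : Compat H CH CG)
    (Φ : H → ℂ) (hΦ : IsSCF CH Φ) (θ : G → ℂ) (hθ : IsSCF CG θ) :
    iprod G (Sind H CG Φ) θ = iprod H Φ (fun h => θ (h : G)) :=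
  stmt4_general H CG Φ θ hθ
end

section
/- (Uchida–van der Waall Theorem for arithmetic Heilbronn supercharacters) Let G be a finite group with a compatible family of supercharacter theories on its subgroups and integers {n(H,σ)} satisfying ACH1–ACH3. Suppose H is a subgroup of G such that Sind_H^G 1_H = 1_G + Σ_{i∈I} Sind_{H_i}^G σ_i, where I is a finite index set, each H_i is a subgroup of G, and each σ_i is a supercharacter of H_i that is a sum of linear characters of H_i. Then n(H, 1_H) ≥ n(G, 1_G). -/
open scoped BigOperators Classical

/-!
Additivity (ACH1) and invariance under superinduction (ACH2) turn the decomposition of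
`Sind_H^G 1_H` into `n(H, 1_H) = n(G, 1_G) + ∑ᵢ n(Hᵢ, σᵢ)`, and ACH3 makes every summand
nonnegative.

The one input from supercharacter theory is that `1` is a supercharacter of every theory, i.e.
`{1}` is a part of `X`. Pairing against irreducible characters shows that the supercharacters
`σ_A` are linearly independent; since `|X| = |K|` they therefore span the superclass functions,
which contain the constant `1`. Pairing `1 = ∑ c_A σ_A` with an irreducible `χ` in the part `A₀`
of the trivial character gives `c_{A₀} χ(1) = [χ = 1]`, which forces `A₀ = {1}`.
-/

open CategoryTheory

section Characters

variable {K : Type} [Group K]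

noncomputable abbrev trivRep (K : Type) [Group K] : FDRep ℂ K :=
  FDRep.of (Representation.trivial ℂ K ℂ)

instance : Simple (trivRep K) :=
  letI F := Action.forget (FGModuleCat ℂ) K ⋙ forget₂ (FGModuleCat ℂ) (ModuleCat ℂ)
  haveI : Simple (F.obj (trivRep K)) := simple_of_isSimpleModule (R := ℂ) (M := ℂ)
  F.simple_of_simple_obj _

theorem triv_mem_Irr : triv K ∈ Irr K :=
  ⟨trivRep K, inferInstance, by ext g; simp [triv, FDRep.character]⟩

theorem sigma_eq_sum {A : Set (K → ℂ)} (hA : A.Finite) :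
    sigma A = ∑ χ ∈ hA.toFinset, χ 1 • χ := by
  ext g
  rw [sigma, finsum_mem_eq_finite_toFinset_sum _ hA, Finset.sum_apply]
  rfl

variable [Fintype K]

theorem sum_mul_inv_of_mem_Irr {χ ψ : K → ℂ} (hχ : χ ∈ Irr K) (hψ : ψ ∈ Irr K) :
    ∑ g, χ g * ψ g⁻¹ = if χ = ψ then (Fintype.card K : ℂ) else 0 := by
  obtain ⟨V, hV, rfl⟩ := hχ
  obtain ⟨W, hW, rfl⟩ := hψ
  have : Invertible (Nat.card K : ℂ) := invertibleOfNonzero (by simp)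
  split_ifs with h
  · have horth := FDRep.char_orthonormal V V
    rw [if_pos ⟨Iso.refl V⟩, Nat.card_eq_fintype_card, inv_mul_eq_one₀ (by simp)] at horth
    rw [← h, horth]
  · have horth := FDRep.char_orthonormal V W
    rw [if_neg fun ⟨i⟩ => h (FDRep.char_iso i), mul_eq_zero] at horth
    exact horth.resolve_left (inv_ne_zero (by simp))

theorem apply_one_ne_zero_of_mem_Irr {χ : K → ℂ} (hχ : χ ∈ Irr K) : χ 1 ≠ 0 := by
  intro h0
  have horth := sum_mul_inv_of_mem_Irr hχ hχ
  obtain ⟨V, hV, rfl⟩ := hχ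
  rw [FDRep.char_one, Nat.cast_eq_zero, Module.finrank_zero_iff] at h0
  have hzero (g : K) : V.character g = 0 := by
    rw [FDRep.character, Subsingleton.elim (V.ρ g) 0, map_zero]
  simp [hzero, eq_comm] at horth

/-- For a character `χ` this is `|K|` times the inner product `⟨f, χ⟩`, as `χ g⁻¹ = conj (χ g)`. -/
def charPairing (χ : K → ℂ) : (K → ℂ) →ₗ[ℂ] ℂ where
  toFun f := ∑ g, f g * χ g⁻¹
  map_add' f f' := by simp [add_mul, Finset.sum_add_distrib]
  map_smul' c f := by simp [Finset.mul_sum, mul_assoc]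

theorem charPairing_of_mem_Irr {χ ψ : K → ℂ} (hχ : χ ∈ Irr K) (hψ : ψ ∈ Irr K) :
    charPairing χ ψ = if ψ = χ then (Fintype.card K : ℂ) else 0 :=
  sum_mul_inv_of_mem_Irr hψ hχ

theorem linearIndependent_Irr : LinearIndependent ℂ ((↑) : Irr K → K → ℂ) := by
  rw [linearIndependent_iff']
  intro s c hsum ψ hψs
  have hterm : ∀ χ ∈ s, charPairing ψ.1 (c χ • χ.1) =
      if χ = ψ then c χ * (Fintype.card K : ℂ) else 0 := by
    intro χ _
    simp only [map_smul, charPairing_of_mem_Irr ψ.2 χ.2, smul_eq_mul, Subtype.val_inj, mul_ite,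
      mul_zero]
  have hpair := congrArg (charPairing ψ.1) hsum
  rw [map_sum, Finset.sum_congr rfl hterm, Finset.sum_ite_eq', if_pos hψs, map_zero] at hpair
  exact (mul_eq_zero.mp hpair).resolve_right (by simp)

theorem finite_Irr : (Irr K).Finite :=
  linearIndependent_Irr.setFinite

theorem charPairing_sigma {A : Set (K → ℂ)} (hA : A ⊆ Irr K) {χ : K → ℂ} (hχ : χ ∈ Irr K) :
    charPairing χ (sigma A) = if χ ∈ A then χ 1 * (Fintype.card K : ℂ) else 0 := by
  have hAfin : A.Finite := finite_Irr.subset hA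
  have hterm : ∀ ψ ∈ hAfin.toFinset, charPairing χ (ψ 1 • ψ) =
      if ψ = χ then ψ 1 * (Fintype.card K : ℂ) else 0 := by
    intro ψ hψ
    rw [map_smul, charPairing_of_mem_Irr hχ (hA (hAfin.mem_toFinset.mp hψ)), smul_eq_mul,
      mul_ite, mul_zero]
  rw [sigma_eq_sum hAfin, map_sum, Finset.sum_congr rfl hterm, Finset.sum_ite_eq']
  simp only [Set.Finite.mem_toFinset]

end Characters

namespace SCTheory

variable {K : Type} [Group K] [Fintype K] (C : SCTheory K)

theorem eq_of_mem_of_mem {A A' : Set (K → ℂ)} (hA : A ∈ C.X) (hA' : A' ∈ C.X) {χ : K → ℂ}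
    (hχA : χ ∈ A) (hχA' : χ ∈ A') : A = A' :=
  (C.partX.2.2 χ (C.partX.2.1 A hA hχA)).unique ⟨hA, hχA⟩ ⟨hA', hχA'⟩

def scfSubmodule : Submodule ℂ (K → ℂ) where
  carrier := {f | IsSCF C f}
  add_mem' hf hg B hB x hx y hy := by
    simp only [Pi.add_apply, hf B hB x hx y hy, hg B hB x hx y hy]
  zero_mem' _ _ _ _ _ _ := rfl
  smul_mem' c f hf B hB x hx y hy := by
    simp only [Pi.smul_apply, hf B hB x hx y hy]

theorem finrank_scfSubmodule_le : Module.finrank ℂ C.scfSubmodule ≤ C.K.ncard := by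
  let rep (B : C.K) : K := (C.partK.1 B.1 B.2).some
  let restrict : C.scfSubmodule →ₗ[ℂ] (C.K → ℂ) :=
    { toFun f B := (f : K → ℂ) (rep B)
      map_add' _ _ := rfl
      map_smul' _ _ := rfl }
  have hinj : Function.Injective restrict := by
    intro f g hfg
    ext x
    obtain ⟨B, ⟨hB, hxB⟩, -⟩ := C.partK.2.2 x (Set.mem_univ x)
    have hrep : rep ⟨B, hB⟩ ∈ B := (C.partK.1 B hB).some_mem
    rw [f.2 B hB x hxB _ hrep, g.2 B hB x hxB _ hrep]
    exact congrFun hfg ⟨B, hB⟩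
  calc Module.finrank ℂ C.scfSubmodule ≤ Module.finrank ℂ (C.K → ℂ) :=
        LinearMap.finrank_le_finrank_of_injective hinj
    _ = C.K.ncard := by
        rw [Module.finrank_fintype_fun_eq_card, ← Nat.card_eq_fintype_card, Nat.card_coe_set_eq]

theorem charPairing_sum_sigma (s : Finset C.X) (c : C.X → ℂ) {A₁ : C.X} {χ : K → ℂ}
    (hχ : χ ∈ A₁.1) :
    charPairing χ (∑ A ∈ s, c A • sigma A.1) =
      if A₁ ∈ s then c A₁ * (χ 1 * (Fintype.card K : ℂ)) else 0 := by
  have hχIrr : χ ∈ Irr K := C.partX.2.1 A₁ A₁.2 hχ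
  have hterm : ∀ A ∈ s, charPairing χ (c A • sigma A.1) =
      if A = A₁ then c A * (χ 1 * (Fintype.card K : ℂ)) else 0 := by
    intro A _
    have hmem : χ ∈ A.1 ↔ A = A₁ :=
      ⟨fun h => Subtype.ext (C.eq_of_mem_of_mem A.2 A₁.2 h hχ), fun h => h ▸ hχ⟩
    simp only [map_smul, charPairing_sigma (C.partX.2.1 A A.2) hχIrr, hmem, smul_eq_mul, mul_ite,
      mul_zero]
  rw [map_sum, Finset.sum_congr rfl hterm, Finset.sum_ite_eq']

theorem linearIndependent_sigma : LinearIndependent ℂ fun A : C.X => sigma A.1 := by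
  rw [linearIndependent_iff']
  intro s c hsum A₁ hA₁
  obtain ⟨χ, hχ⟩ := C.partX.1 A₁ A₁.2
  have hpair := congrArg (charPairing χ) hsum
  rw [C.charPairing_sum_sigma s c hχ, if_pos hA₁, map_zero] at hpair
  exact (mul_eq_zero.mp hpair).resolve_right
    (mul_ne_zero (apply_one_ne_zero_of_mem_Irr (C.partX.2.1 A₁ A₁.2 hχ)) (by simp))

theorem finite_X : C.X.Finite :=
  finite_Irr.finite_subsets.subset fun A hA => C.partX.2.1 A hA

noncomputable instance : Fintype C.X := C.finite_X.fintype

theorem span_sigma_eq_scfSubmodule :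
    Submodule.span ℂ (Set.range fun A : C.X => sigma A.1) = C.scfSubmodule := by
  refine Submodule.eq_of_le_of_finrank_le
    (Submodule.span_le.mpr (Set.range_subset_iff.mpr fun A => C.const A A.2)) ?_
  rw [finrank_span_eq_card C.linearIndependent_sigma, ← Nat.card_eq_fintype_card,
    Nat.card_coe_set_eq, C.card_eq]
  exact C.finrank_scfSubmodule_le

theorem eq_singleton_of_triv_mem {A₀ : Set (K → ℂ)} (hA₀ : A₀ ∈ C.X) (htriv : triv K ∈ A₀) :
    A₀ = {triv K} := by
  have hspan : triv K ∈ Submodule.span ℂ (Set.range fun A : C.X => sigma A.1) := by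
    rw [C.span_sigma_eq_scfSubmodule]
    exact fun _ _ _ _ _ _ => rfl
  obtain ⟨c, hc⟩ := (Submodule.mem_span_range_iff_exists_fun ℂ).mp hspan
  have hcoeff {χ : K → ℂ} (hχ : χ ∈ A₀) :
      c ⟨A₀, hA₀⟩ * (χ 1 * (Fintype.card K : ℂ)) =
        if triv K = χ then (Fintype.card K : ℂ) else 0 := by
    have hpair := C.charPairing_sum_sigma Finset.univ c (A₁ := ⟨A₀, hA₀⟩) hχ
    rw [hc, if_pos (Finset.mem_univ _), charPairing_of_mem_Irr (C.partX.2.1 _ hA₀ hχ) triv_mem_Irr]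
      at hpair
    exact hpair.symm
  have hc₀ : c ⟨A₀, hA₀⟩ = 1 := by
    simpa [triv, (by simp : (Fintype.card K : ℂ) ≠ 0)] using hcoeff htriv
  refine Set.eq_singleton_iff_unique_mem.mpr ⟨htriv, fun χ hχ => ?_⟩
  by_contra hne
  have := hcoeff hχ
  rw [if_neg (Ne.symm hne), hc₀, one_mul] at this
  exact mul_ne_zero (apply_one_ne_zero_of_mem_Irr (C.partX.2.1 _ hA₀ hχ)) (by simp) this

end SCTheory

theorem SCTheory.isSC_one {K : Type} [Group K] [Finite K] (C : SCTheory K) :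
    IsSC C fun _ => 1 := by
  have := Fintype.ofFinite K
  obtain ⟨A₀, ⟨hA₀, htriv⟩, -⟩ := C.partX.2.2 (triv K) triv_mem_Irr
  refine ⟨A₀, hA₀, ?_⟩
  rw [C.eq_singleton_of_triv_mem hA₀ htriv]
  ext g
  simp [sigma, triv]

theorem map_add_sum_of_map_add_on {M N ι : Type*} [AddCommMonoid M] [AddCommMonoid N]
    {S : AddSubmonoid M} {f : M → N} (hf : ∀ a b, a ∈ S → b ∈ S → f (a + b) = f a + f b)
    {s : Finset ι} {x : ι → M} (hx : ∀ i ∈ s, x i ∈ S) {a : M} (ha : a ∈ S) :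
    f (a + ∑ i ∈ s, x i) = f a + ∑ i ∈ s, f (x i) := by
  induction s using Finset.cons_induction generalizing a with
  | empty => simp
  | cons i s hi ih =>
    rw [Finset.forall_mem_cons] at hx
    rw [Finset.sum_cons, Finset.sum_cons, ← add_assoc, ih hx.2 (S.add_mem ha hx.1),
      hf _ _ ha hx.1, add_assoc]

theorem stmt10_general {G : Type} [Group G] [Finite G]
    (𝒞 : ∀ H : Subgroup G, SCTheory H) (CG : SCTheory G)
    (n : ∀ H : Subgroup G, (H → ℂ) → ℤ) (nG : (G → ℂ) → ℤ)
    (ACH1G : ∀ f g : G → ℂ,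
      f ∈ AddSubmonoid.closure ({σ | IsSC CG σ} ∪
        {f | ∃ (H : Subgroup G) (σ : H → ℂ), IsSC (𝒞 H) σ ∧ f = Sind H CG σ}) →
      g ∈ AddSubmonoid.closure ({σ | IsSC CG σ} ∪
        {f | ∃ (H : Subgroup G) (σ : H → ℂ), IsSC (𝒞 H) σ ∧ f = Sind H CG σ}) →
      nG (f + g) = nG f + nG g)
    (ACH2 : ∀ (H : Subgroup G) (σ : H → ℂ), IsSC (𝒞 H) σ → nG (Sind H CG σ) = n H σ)
    (ACH3 : ∀ (H : Subgroup G) (σ : H → ℂ), IsSC (𝒞 H) σ → IsSumLin σ → 0 ≤ n H σ)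
    (H : Subgroup G) (ι : Type) (I : Finset ι) (Hi : ι → Subgroup G)
    (σi : ∀ i : ι, (Hi i) → ℂ)
    (hσ : ∀ i ∈ I, IsSC (𝒞 (Hi i)) (σi i) ∧ IsSumLin (σi i))
    (heq : Sind H CG (fun _ => 1) =
      (fun _ => (1 : ℂ)) + ∑ i ∈ I, Sind (Hi i) CG (σi i)) :
    nG (fun _ => 1) ≤ n H (fun _ => 1) := by
  have hSind_nonneg (i : ι) (hi : i ∈ I) : 0 ≤ nG (Sind (Hi i) CG (σi i)) :=
    (ACH2 _ _ (hσ i hi).1).symm ▸ ACH3 _ _ (hσ i hi).1 (hσ i hi).2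
  calc nG (fun _ => 1)
      ≤ nG (fun _ => 1) + ∑ i ∈ I, nG (Sind (Hi i) CG (σi i)) :=
        le_add_of_nonneg_right (Finset.sum_nonneg hSind_nonneg)
    _ = nG ((fun _ => 1) + ∑ i ∈ I, Sind (Hi i) CG (σi i)) :=
        (map_add_sum_of_map_add_on ACH1G
          (fun i hi => AddSubmonoid.subset_closure (Or.inr ⟨Hi i, σi i, (hσ i hi).1, rfl⟩))
          (AddSubmonoid.subset_closure (Or.inl CG.isSC_one))).symm
    _ = n H (fun _ => 1) := by rw [← heq, ACH2 H _ (𝒞 H).isSC_one]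

/-- Uchida–van der Waall Theorem for arithmetic Heilbronn supercharacters. -/
theorem stmt10 {G : Type} [Group G] [Finite G]
    (𝒞 : ∀ H : Subgroup G, SCTheory H) (CG : SCTheory G)
    (hfam : ∀ (H₁ H₂ : Subgroup G) (hle : H₁ ≤ H₂), CompatLE hle (𝒞 H₁) (𝒞 H₂))
    (hfamG : ∀ H : Subgroup G, Compat H (𝒞 H) CG)
    (n : ∀ H : Subgroup G, (H → ℂ) → ℤ) (nG : (G → ℂ) → ℤ)
    (ACH1G : ∀ f g : G → ℂ,
      f ∈ AddSubmonoid.closure ({σ | IsSC CG σ} ∪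
        {f | ∃ (H : Subgroup G) (σ : H → ℂ), IsSC (𝒞 H) σ ∧ f = Sind H CG σ}) →
      g ∈ AddSubmonoid.closure ({σ | IsSC CG σ} ∪
        {f | ∃ (H : Subgroup G) (σ : H → ℂ), IsSC (𝒞 H) σ ∧ f = Sind H CG σ}) →
      nG (f + g) = nG f + nG g)
    (ACH1 : ∀ (H : Subgroup G) (f g : H → ℂ),
      f ∈ AddSubmonoid.closure {σ | IsSC (𝒞 H) σ} →
      g ∈ AddSubmonoid.closure {σ | IsSC (𝒞 H) σ} →
      n H (f + g) = n H f + n H g)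
    (ACH2 : ∀ (H : Subgroup G) (σ : H → ℂ), IsSC (𝒞 H) σ → nG (Sind H CG σ) = n H σ)
    (ACH3 : ∀ (H : Subgroup G) (σ : H → ℂ), IsSC (𝒞 H) σ → IsSumLin σ → 0 ≤ n H σ)
    (H : Subgroup G) (ι : Type) (I : Finset ι) (Hi : ι → Subgroup G)
    (σi : ∀ i : ι, (Hi i) → ℂ)
    (hσ : ∀ i ∈ I, IsSC (𝒞 (Hi i)) (σi i) ∧ IsSumLin (σi i))
    (heq : Sind H CG (fun _ => 1) =
      (fun _ => (1 : ℂ)) + ∑ i ∈ I, Sind (Hi i) CG (σi i)) :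
    nG (fun _ => 1) ≤ n H (fun _ => 1) :=
  stmt10_general 𝒞 CG n nG ACH1G ACH2 ACH3 H ι I Hi σi hσ heq
end

section
/- Let H be a subgroup of a finite group G with compatible supercharacter theories C_H and C_G, and let σ_Y be a supercharacter of H. Then for any supercharacter σ_X of G, ⟨σ_X|_H, σ_Y⟩_H = ⟨σ_X, Sind_H^G σ_Y⟩_G. -/
open scoped BigOperators Classical

/-! Both sides equal `|H|⁻¹ ∑_{g ∈ G} σX g * conj (σY⁰ g)`, where `σY⁰` is the extension of `σY`
by zero. On the left this is just the extension by zero. On the right, `Sind` replaces `σY⁰` by its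
averages over superclasses; since `σX` is constant on superclasses, summing over `G` undoes the
averaging. -/

theorem Fintype.sum_inv_card_mul_sum_of_partition {α K : Type*} [Fintype α] [Field K] [CharZero K]
    (c : α → Finset α) (mem_self : ∀ x, x ∈ c x) (eq_of_mem : ∀ x y, y ∈ c x → c y = c x)
    (F : α → K) :
    ∑ x, ((c x).card : K)⁻¹ * ∑ y ∈ c x, F y = ∑ y, F y := by
  have mem_comm : ∀ x y, y ∈ c x → x ∈ c y := fun x y hy => eq_of_mem x y hy ▸ mem_self x
  calc ∑ x, ((c x).card : K)⁻¹ * ∑ y ∈ c x, F y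
      = ∑ x, ∑ y ∈ c x, ((c y).card : K)⁻¹ * F y := by
        refine Finset.sum_congr rfl fun x _ => ?_
        rw [Finset.mul_sum]
        exact Finset.sum_congr rfl fun y hy => by rw [eq_of_mem x y hy]
    _ = ∑ y, ∑ x ∈ c y, ((c y).card : K)⁻¹ * F y :=
        Finset.sum_comm' fun x y => by
          simpa using ⟨mem_comm x y, mem_comm y x⟩
    _ = ∑ y, F y := by
        refine Finset.sum_congr rfl fun y _ => ?_
        have : ((c y).card : K) ≠ 0 := Nat.cast_ne_zero.2 (Finset.card_ne_zero_of_mem (mem_self y))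
        rw [Finset.sum_const, nsmul_eq_mul, ← mul_assoc, mul_inv_cancel₀ this, one_mul]

theorem sum_ext0 {G : Type} [Group G] [Fintype G] (H : Subgroup G) (Φ : H → ℂ) :
    ∑ g, ext0 H Φ g = ∑ h, Φ h := by
  have outside : ∑ g : {g // g ∉ H}, ext0 H Φ g = 0 := Finset.sum_eq_zero fun g _ => dif_neg g.2
  rw [← Fintype.sum_subtype_add_sum_subtype (· ∈ H), outside, add_zero]
  exact Finset.sum_congr rfl fun h _ => dif_pos h.2

namespace SCTheory

variable {G : Type} [Group G] [Finite G] (C : SCTheory G)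

private theorem SCl_mem_K_and_mem (g : G) : SCl C g ∈ C.K ∧ g ∈ SCl C g := by
  obtain ⟨B, ⟨hB, hgB⟩, huniq⟩ := C.partK.2.2 g (Set.mem_univ g)
  suffices SCl C g = B from this ▸ ⟨hB, hgB⟩
  refine subset_antisymm ?_ fun x hx => ⟨B, ⟨hB, hgB⟩, hx⟩
  rintro x ⟨B', hB', hxB'⟩
  rwa [huniq B' hB'] at hxB'

theorem SCl_mem_K (g : G) : SCl C g ∈ C.K := (C.SCl_mem_K_and_mem g).1

theorem mem_SCl_self (g : G) : g ∈ SCl C g := (C.SCl_mem_K_and_mem g).2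

theorem SCl_eq_of_mem {g x : G} (hx : x ∈ SCl C g) : SCl C x = SCl C g := by
  obtain ⟨B, _, huniq⟩ := C.partK.2.2 x (Set.mem_univ x)
  rw [huniq _ ⟨C.SCl_mem_K x, C.mem_SCl_self x⟩, huniq _ ⟨C.SCl_mem_K g, hx⟩]

end SCTheory

theorem IsSC.isSCF {G : Type} [Group G] [Finite G] {C : SCTheory G} {σ : G → ℂ}
    (hσ : IsSC C σ) : IsSCF C σ := by
  obtain ⟨A, hA, rfl⟩ := hσ
  exact C.const A hA

theorem IsSCF.apply_eq_of_mem_SCl {G : Type} [Group G] [Finite G] {C : SCTheory G}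
    {f : G → ℂ} (hf : IsSCF C f) {g x : G} (hx : x ∈ SCl C g) : f x = f g :=
  hf _ (C.SCl_mem_K g) x hx g (C.mem_SCl_self g)

theorem iprod_restrict {G : Type} [Group G] [Fintype G] (H : Subgroup G)
    (f : G → ℂ) (Φ : H → ℂ) :
    iprod H (fun h => f h) Φ =
      (Nat.card H : ℂ)⁻¹ * ∑ g, f g * starRingEnd ℂ (ext0 H Φ g) := by
  rw [iprod, finsum_eq_sum_of_fintype, ← sum_ext0]
  congr 1
  refine Finset.sum_congr rfl fun g _ => ?_
  by_cases hg : g ∈ H <;> simp [ext0, hg]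

theorem iprod_Sind_of_isSCF {G : Type} [Group G] [Fintype G] (H : Subgroup G)
    (C : SCTheory G) {f : G → ℂ} (hf : IsSCF C f) (Φ : H → ℂ) :
    iprod G f (Sind H C Φ) =
      (Nat.card H : ℂ)⁻¹ * ∑ g, f g * starRingEnd ℂ (ext0 H Φ g) := by
  set F : G → ℂ := fun g => f g * starRingEnd ℂ (ext0 H Φ g)
  have summand : ∀ g, f g * starRingEnd ℂ (Sind H C Φ g) = (Nat.card G / Nat.card H : ℂ) *
      (((SCl C g).toFinset.card : ℂ)⁻¹ * ∑ y ∈ (SCl C g).toFinset, F y) := by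
    intro g
    rw [Sind, finsum_mem_eq_toFinset_sum, Set.ncard_eq_toFinset_card']
    simp only [map_mul, map_div₀, map_natCast, map_sum, Finset.mul_sum, F]
    refine Finset.sum_congr rfl fun y hy => ?_
    rw [hf.apply_eq_of_mem_SCl (Set.mem_toFinset.1 hy)]
    ring
  rw [iprod, finsum_eq_sum_of_fintype]
  simp_rw [summand]
  rw [← Finset.mul_sum, Fintype.sum_inv_card_mul_sum_of_partition _ (fun g => by
      simpa using C.mem_SCl_self g) (fun g x hx => by
      simpa using C.SCl_eq_of_mem (by simpa using hx))]
  field_simp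

theorem stmt15_general {G : Type} [Group G] [Finite G] (H : Subgroup G)
    (CG : SCTheory G)
    (σX : G → ℂ) (hX : IsSC CG σX) (σY : H → ℂ) :
    iprod H (fun h => σX (h : G)) σY = iprod G σX (Sind H CG σY) := by
  have := Fintype.ofFinite G
  rw [iprod_restrict, iprod_Sind_of_isSCF H CG hX.isSCF]

/-- Super Frobenius Reciprocity for supercharacters. -/
theorem stmt15 {G : Type} [Group G] [Finite G] (H : Subgroup G)
    (CH : SCTheory H) (CG : SCTheory G) (hc : Compat H CH CG)
    (σX : G → ℂ) (hX : IsSC CG σX) (σY : H → ℂ) (hY : IsSC CH σY) :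
    iprod H (fun h => σX (h : G)) σY = iprod G σX (Sind H CG σY) :=
  stmt15_general H CG σX hX σY
end
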